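/- arXiv:2201.08462 — 3 statements merged into one kernel-verified Lean document; each statement's English description precedes it below -/
import Mathlib

section
/- Let $f : [a,b] \to \mathbb{R}$ be $\lambda$-Hölder continuous and $g : [a,b] \to \mathbb{R}$ be $\mu$-Hölder continuous with $\lambda + \mu > 1$. Then there exists a constant $c_{\lambda,\mu}$ depending only on $\lambda$ and $\mu$ such that $\left| \int_a^b (f(s) - f(a))\, dg(s) \right| \le c_{\lambda,\mu} \|f\|_{\lambda;[a,b]} \|g\|_{\mu;[a,b]} (b-a)^{\lambda+\mu}$, where the integral is the Young (Riemann–Stieltjes) integral. -/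
/-!
Along the dyadic partitions of `[a, b]`, halving every cell changes the left Riemann–Stieltjes
sum of `f - f a` against `g` by one midpoint correction `(f(mid) - f(left)) (g(right) - g(mid))`
per cell. By the Hölder bounds each correction is at most `Cf Cg (h / 2)^(λ+μ)` for a cell of
length `h`, so passing from `2^m` to `2^(m+1)` cells moves the sum by at most
`Cf Cg (b - a)^(λ+μ) (2^(1-λ-μ))^m`, a geometric sequence since `λ + μ > 1`. The sum over a single
cell is `0`, so `|I| ≤ Cf Cg (b - a)^(λ+μ) / (1 - 2^(1-λ-μ))`.
-/

open Filter

/-- `f` is `l`-Hölder continuous on `[a,b]` with constant `C`. -/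
def HolderOnI (f : ℝ → ℝ) (l a b C : ℝ) : Prop :=
  ∀ s ∈ Set.Icc a b, ∀ t ∈ Set.Icc a b, |f t - f s| ≤ C * |t - s| ^ l

/-- `I` is the Young (Riemann–Stieltjes) integral `∫_a^b f dg`, defined as the limit of
left Riemann–Stieltjes sums along uniform partitions. -/
def IsRSIntegral (f g : ℝ → ℝ) (a b I : ℝ) : Prop :=
  Tendsto (fun n : ℕ => ∑ k ∈ Finset.range n,
      f (a + (k : ℝ) * (b - a) / n) *
        (g (a + ((k : ℝ) + 1) * (b - a) / n) - g (a + (k : ℝ) * (b - a) / n)))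
    atTop (nhds I)

open Topology

theorem Finset.sum_range_two_mul {M : Type*} [AddCommMonoid M] (F : ℕ → M) (n : ℕ) :
    ∑ j ∈ range (2 * n), F j = ∑ k ∈ range n, (F (2 * k) + F (2 * k + 1)) := by
  induction n with
  | zero => simp
  | succ n ih =>
    rw [Nat.mul_succ, sum_range_succ, sum_range_succ, sum_range_succ, ih, add_assoc]

theorem HolderOnI.sub_const {f : ℝ → ℝ} {l a b C : ℝ} (hf : HolderOnI f l a b C) (c : ℝ) :
    HolderOnI (fun s => f s - c) l a b C := by
  intro s hs t ht
  simpa using hf s hs t ht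

noncomputable def gridPoint (a b : ℝ) (n k : ℕ) : ℝ := a + k * (b - a) / n

noncomputable def leftRiemannSum (f g : ℝ → ℝ) (a b : ℝ) (n : ℕ) : ℝ :=
  ∑ k ∈ Finset.range n,
    f (gridPoint a b n k) * (g (gridPoint a b n (k + 1)) - g (gridPoint a b n k))

section UniformPartition

variable {a b : ℝ}

theorem gridPoint_mem_Icc (hab : a ≤ b) {n k : ℕ} (hk : k ≤ n) :
    gridPoint a b n k ∈ Set.Icc a b := by
  have hratio : (k : ℝ) / n ≤ 1 := div_le_one_of_le₀ (by exact_mod_cast hk) n.cast_nonneg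
  have hba : 0 ≤ b - a := sub_nonneg.2 hab
  have hoffset : 0 ≤ k * (b - a) / n := by positivity
  unfold gridPoint
  constructor
  · linarith
  · rw [mul_div_right_comm]; nlinarith

theorem gridPoint_two_mul (n k : ℕ) : gridPoint a b (2 * n) (2 * k) = gridPoint a b n k := by
  simp only [gridPoint]; push_cast
  rw [mul_assoc, mul_div_mul_left _ _ two_ne_zero]

theorem gridPoint_succ_sub (n k : ℕ) :
    gridPoint a b n (k + 1) - gridPoint a b n k = (b - a) / n := by
  simp only [gridPoint]; push_cast; ring

theorem isRSIntegral_iff_tendsto_leftRiemannSum {f g : ℝ → ℝ} {I : ℝ} :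
    IsRSIntegral f g a b I ↔ Tendsto (leftRiemannSum f g a b) atTop (𝓝 I) := by
  unfold IsRSIntegral leftRiemannSum gridPoint
  push_cast
  rfl

theorem leftRiemannSum_one_sub_const (f g : ℝ → ℝ) :
    leftRiemannSum (fun s => f s - f a) g a b 1 = 0 := by
  simp [leftRiemannSum, gridPoint]

theorem leftRiemannSum_two_mul_sub (f g : ℝ → ℝ) (n : ℕ) :
    leftRiemannSum f g a b (2 * n) - leftRiemannSum f g a b n =
      ∑ k ∈ Finset.range n, (f (gridPoint a b (2 * n) (2 * k + 1)) - f (gridPoint a b n k)) *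
        (g (gridPoint a b n (k + 1)) - g (gridPoint a b (2 * n) (2 * k + 1))) := by
  rw [leftRiemannSum, leftRiemannSum, Finset.sum_range_two_mul, ← Finset.sum_sub_distrib]
  refine Finset.sum_congr rfl fun k _ => ?_
  rw [show 2 * k + 1 + 1 = 2 * (k + 1) by ring, gridPoint_two_mul, gridPoint_two_mul]
  ring

theorem abs_leftRiemannSum_two_mul_sub_le {f g : ℝ → ℝ} {lam mu Cf Cg : ℝ} (hab : a ≤ b)
    (hlm : 0 < lam + mu) (hf : HolderOnI f lam a b Cf) (hg : HolderOnI g mu a b Cg) (n : ℕ) :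
    |leftRiemannSum f g a b (2 * n) - leftRiemannSum f g a b n| ≤
      n * (Cf * Cg * ((b - a) / (2 * n)) ^ (lam + mu)) := by
  set h := (b - a) / (2 * n)
  have hh : 0 ≤ h := div_nonneg (sub_nonneg.2 hab) (by positivity)
  rw [leftRiemannSum_two_mul_sub]
  suffices hcell : ∀ k ∈ Finset.range n,
      |(f (gridPoint a b (2 * n) (2 * k + 1)) - f (gridPoint a b n k)) *
        (g (gridPoint a b n (k + 1)) - g (gridPoint a b (2 * n) (2 * k + 1)))| ≤
        Cf * Cg * h ^ (lam + mu) by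
    simpa using (Finset.abs_sum_le_sum_abs _ _).trans (Finset.sum_le_card_nsmul _ _ _ hcell)
  intro k hk
  have hkn : k < n := Finset.mem_range.1 hk
  have hmid_left : gridPoint a b (2 * n) (2 * k + 1) - gridPoint a b n k = h := by
    rw [← gridPoint_two_mul n k, gridPoint_succ_sub]; push_cast; rfl
  have hright_mid : gridPoint a b n (k + 1) - gridPoint a b (2 * n) (2 * k + 1) = h := by
    rw [← gridPoint_two_mul n (k + 1), show 2 * (k + 1) = 2 * k + 1 + 1 by ring, gridPoint_succ_sub]
    push_cast; rfl
  have hmid := gridPoint_mem_Icc hab (n := 2 * n) (k := 2 * k + 1) (by omega)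
  have hfb := hf _ (gridPoint_mem_Icc hab hkn.le) _ hmid
  have hgb := hg _ hmid _ (gridPoint_mem_Icc hab hkn)
  rw [hmid_left, abs_of_nonneg hh] at hfb
  rw [hright_mid, abs_of_nonneg hh] at hgb
  calc _ = _ := abs_mul _ _
    _ ≤ (Cf * h ^ lam) * (Cg * h ^ mu) :=
      mul_le_mul hfb hgb (abs_nonneg _) ((abs_nonneg _).trans hfb)
    _ = Cf * Cg * h ^ (lam + mu) := by rw [Real.rpow_add' hh hlm.ne']; ring

end UniformPartition

theorem two_pow_mul_rpow_div_two_pow_succ_le {x s : ℝ} (hx : 0 ≤ x) (hs : 0 ≤ s) (m : ℕ) :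
    2 ^ m * (x / 2 ^ (m + 1)) ^ s ≤ x ^ s * ((2 : ℝ) ^ (1 - s)) ^ m := by
  have hexp : (2 : ℝ) ^ m / ((2 : ℝ) ^ (m + 1)) ^ s ≤ ((2 : ℝ) ^ (1 - s)) ^ m := by
    rw [← Real.rpow_natCast (2 : ℝ) m, ← Real.rpow_natCast (2 : ℝ) (m + 1),
      ← Real.rpow_mul zero_le_two, ← Real.rpow_sub two_pos, ← Real.rpow_natCast _ m,
      ← Real.rpow_mul zero_le_two, Real.rpow_le_rpow_left_iff one_lt_two]
    push_cast
    nlinarith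
  rw [Real.div_rpow hx (by positivity)]
  calc _ = x ^ s * ((2 : ℝ) ^ m / ((2 : ℝ) ^ (m + 1)) ^ s) := by ring
    _ ≤ _ := mul_le_mul_of_nonneg_left hexp (Real.rpow_nonneg hx s)

/-- Young's inequality for the Young integral: for `f` λ-Hölder and `g` μ-Hölder with
`λ + μ > 1`, `|∫_a^b (f(s) - f(a)) dg(s)| ≤ c_{λ,μ} ‖f‖_λ ‖g‖_μ (b-a)^{λ+μ}`. -/
theorem young_inequality :
    ∀ lam mu : ℝ, 0 < lam → lam ≤ 1 → 0 < mu → mu ≤ 1 → 1 < lam + mu →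
    ∃ c : ℝ, 0 < c ∧ ∀ (a b : ℝ) (f g : ℝ → ℝ) (Cf Cg I : ℝ), a ≤ b →
      0 ≤ Cf → 0 ≤ Cg →
      HolderOnI f lam a b Cf → HolderOnI g mu a b Cg →
      IsRSIntegral (fun s => f s - f a) g a b I →
      |I| ≤ c * Cf * Cg * (b - a) ^ (lam + mu) := by
  intro lam mu _ _ _ _ hlm
  set θ : ℝ := 2 ^ (1 - (lam + mu))
  have hθ : θ < 1 := Real.rpow_lt_one_of_one_lt_of_neg one_lt_two (by linarith)
  refine ⟨1 / (1 - θ), one_div_pos.2 (sub_pos.2 hθ), ?_⟩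
  intro a b f g Cf Cg I hab hCf hCg hf hg hI
  set u : ℕ → ℝ := fun m => leftRiemannSum (fun s => f s - f a) g a b (2 ^ m)
  have hu : Tendsto u atTop (𝓝 I) := (isRSIntegral_iff_tendsto_leftRiemannSum.1 hI).comp
    (tendsto_pow_atTop_atTop_of_one_lt one_lt_two)
  have hstep (m : ℕ) : dist (u m) (u (m + 1)) ≤ Cf * Cg * (b - a) ^ (lam + mu) * θ ^ m := by
    have hdiff :=
      abs_leftRiemannSum_two_mul_sub_le hab (by linarith) (hf.sub_const (f a)) hg (2 ^ m)
    have hdecay :=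
      two_pow_mul_rpow_div_two_pow_succ_le (sub_nonneg.2 hab) (by linarith : 0 ≤ lam + mu) m
    simp only [← pow_succ', Nat.cast_pow, Nat.cast_ofNat] at hdiff
    rw [dist_comm, Real.dist_eq]
    calc |u (m + 1) - u m| ≤ 2 ^ m * (Cf * Cg * ((b - a) / 2 ^ (m + 1)) ^ (lam + mu)) := hdiff
      _ = Cf * Cg * (2 ^ m * ((b - a) / 2 ^ (m + 1)) ^ (lam + mu)) := by ring
      _ ≤ Cf * Cg * ((b - a) ^ (lam + mu) * θ ^ m) := by gcongr
      _ = _ := by ring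
  have hI_le := dist_le_of_le_geometric_of_tendsto₀ θ _ hθ hstep hu
  rw [show u 0 = 0 from leftRiemannSum_one_sub_const f g, dist_zero_left, Real.norm_eq_abs] at hI_le
  calc |I| ≤ _ := hI_le
    _ = _ := by ring
end

section
/- Vanishing of the remainder: under the Lipschitz and linear growth conditions on $b$, the remainder $\sup_{\theta \in \Theta} |R_{n,\varepsilon}(\theta)| \to 0$ as $n \to \infty$ and $\varepsilon \downarrow 0$ (pathwise, for each continuous Hölder path $W^H$). More precisely, for any $\lambda \in (0,H)$ there is a random constant $C$ (depending on $\sup_t |W_t^H|$, $\|W^H\|_{\lambda}$, $\sup_t |x_t^{\theta_0}|$) such that $\sup_\theta |R_{n,\varepsilon}(\theta)| \le C (n^{-1} + \varepsilon n^{-\lambda})$. -/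
/-!
By Grönwall's inequality the solution of `x t = x₀ + ∫₀ᵗ b(x s, θ₀) ds + ε W t` stays below
`M = (|x₀| + M_W + c) e^c` on `[0, 1]`. The drift is then bounded by `c (1 + M)`, so on a window
of length `1/n` the path moves by at most `c (1 + M) / n + ε C_W n^{-λ}`. In the `k`-th summand of
`R_{n,ε}(θ)` the first factor is at most `2 c (1 + M)` by linear growth, and the integral over
`[k/n, (k+1)/n]` is at most `c / n` times that oscillation by the Lipschitz bound; summing `n` such
terms gives `O(n⁻¹ + ε n^{-λ})` uniformly in `θ`, which tends to `0`.
-/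

open Filter

open Set Real intervalIntegral Topology

theorem continuous_of_abs_sub_le {g : ℝ → ℝ} {c : ℝ} (h : ∀ y z, |g y - g z| ≤ c * |y - z|) :
    Continuous g :=
  (LipschitzWith.of_dist_le' (K := c) fun y z => by simpa only [Real.dist_eq] using h y z).continuous

theorem le_mul_exp_of_le_add_mul_integral {u : ℝ → ℝ} {A K T : ℝ} (hK : 0 < K)
    (hu : ContinuousOn u (Icc 0 T)) (h : ∀ t ∈ Icc 0 T, u t ≤ A + K * ∫ s in 0..t, u s) :
    ∀ t ∈ Icc 0 T, u t ≤ A * exp (K * t) := by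
  intro t ht
  have hT : 0 ≤ T := ht.1.trans ht.2
  -- extend `u` continuously to `ℝ` so that its primitive is differentiable everywhere
  set v := IccExtend hT ((Icc 0 T).domRestrict u)
  have hv : Continuous v := continuous_IccExtend_iff.2 hu.domRestrict
  have hvu : EqOn v u (Icc 0 T) := fun s hs => IccExtend_of_mem _ _ hs
  have hint : ∀ t ∈ Icc 0 T, ∫ s in 0..t, u s = ∫ s in 0..t, v s := fun t ht =>
    integral_congr fun s hs => (hvu (uIcc_subset_Icc ⟨le_rfl, hT⟩ ht hs)).symm
  have hderiv : ∀ t, HasDerivAt (fun t => ∫ s in 0..t, v s) (v t) t := fun t =>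
    (hv.integral_hasStrictDerivAt 0 t).hasDerivAt
  have hG := le_gronwallBound_of_liminf_deriv_right_le (δ := 0) (K := K) (ε := A)
    (fun t _ => (hderiv t).continuousAt.continuousWithinAt)
    (fun t _ _ hr => (hderiv t).hasDerivWithinAt.liminf_right_slope_le hr) (by simp)
    (fun s hs => by
      rw [hvu (Ico_subset_Icc_self hs), ← hint s (Ico_subset_Icc_self hs)]
      linarith [h s (Ico_subset_Icc_self hs)]) t ht
  rw [gronwallBound_of_K_ne_0 hK.ne', ← hint t ht] at hG
  calc u t ≤ A + K * ∫ s in 0..t, u s := h t ht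
    _ ≤ A + K * (0 * exp (K * (t - 0)) + A / K * (exp (K * (t - 0)) - 1)) := by gcongr
    _ = A * exp (K * t) := by field_simp; simp only [sub_zero]; ring

theorem abs_le_of_eq_add_integral {g x e : ℝ → ℝ} {x0 c m T : ℝ} (hc : 0 < c)
    (hg : Continuous g) (hgc : ∀ y, |g y| ≤ c * (1 + |y|)) (hx : ContinuousOn x (Icc 0 T))
    (he : ∀ t ∈ Icc 0 T, |e t| ≤ m)
    (heq : ∀ t ∈ Icc 0 T, x t = x0 + (∫ s in 0..t, g (x s)) + e t) :
    ∀ t ∈ Icc 0 T, |x t| ≤ (|x0| + m + c * T) * exp (c * T) := by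
  have hgx : ContinuousOn (fun s => g (x s)) (Icc 0 T) := hg.comp_continuousOn hx
  have hint : ∀ t ∈ Icc 0 T, |x t| ≤ (|x0| + m + c * T) + c * ∫ s in 0..t, |x s| := by
    intro t ht
    have hsub : uIcc 0 t ⊆ Icc 0 T := uIcc_subset_Icc ⟨le_rfl, ht.1.trans ht.2⟩ ht
    have hdrift : |∫ s in 0..t, g (x s)| ≤ c * t + c * ∫ s in 0..t, |x s| := calc
      _ ≤ ∫ s in 0..t, |g (x s)| := abs_integral_le_integral_abs ht.1
      _ ≤ ∫ s in 0..t, (c + c * |x s|) :=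
        integral_mono_on ht.1 ((hgx.mono hsub).intervalIntegrable.abs)
          ((continuousOn_const.add (continuousOn_const.mul hx.abs)).mono hsub).intervalIntegrable
          fun s _ => by linarith [hgc (x s)]
      _ = c * t + c * ∫ s in 0..t, |x s| := by
        rw [integral_add (g := fun s => c * |x s|) intervalIntegrable_const
          ((continuousOn_const.mul hx.abs).mono hsub).intervalIntegrable, integral_const_mul]
        simp [mul_comm]
    have hct : c * t ≤ c * T := mul_le_mul_of_nonneg_left ht.2 hc.le
    rw [heq t ht]
    linarith [abs_add_le (x0 + ∫ s in 0..t, g (x s)) (e t), abs_add_le x0 (∫ s in 0..t, g (x s)),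
      he t ht]
  intro t ht
  have hA : 0 ≤ |x0| + m + c * T := by
    have := (abs_nonneg _).trans (he t ht)
    have := ht.1.trans ht.2
    positivity
  calc |x t| ≤ (|x0| + m + c * T) * exp (c * t) :=
        le_mul_exp_of_le_add_mul_integral hc hx.abs hint t ht
    _ ≤ (|x0| + m + c * T) * exp (c * T) := by gcongr; exact ht.2

theorem abs_sub_le_of_eq_add_integral {g x e : ℝ → ℝ} {x0 K T s t : ℝ}
    (hgx : ContinuousOn (fun r => g (x r)) (Icc 0 T)) (hK : ∀ r ∈ Icc 0 T, |g (x r)| ≤ K)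
    (heq : ∀ t ∈ Icc 0 T, x t = x0 + (∫ r in 0..t, g (x r)) + e t)
    (hs : s ∈ Icc 0 T) (ht : t ∈ Icc 0 T) (hst : s ≤ t) :
    |x t - x s| ≤ K * (t - s) + |e t - e s| := by
  have h0 : (0:ℝ) ∈ Icc 0 T := ⟨le_rfl, hs.1.trans hs.2⟩
  have hii : ∀ t ∈ Icc 0 T, IntervalIntegrable (fun r => g (x r)) MeasureTheory.volume 0 t :=
    fun t ht => (hgx.mono (uIcc_subset_Icc h0 ht)).intervalIntegrable
  have hdiff : x t - x s = (∫ r in s..t, g (x r)) + (e t - e s) := by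
    rw [heq t ht, heq s hs, ← integral_interval_sub_left (hii t ht) (hii s hs)]
    ring
  have hdrift : |∫ r in s..t, g (x r)| ≤ K * (t - s) := by
    have := norm_integral_le_of_norm_le_const (a := s) (b := t) (f := fun r => g (x r)) (C := K)
      fun r hr => by
        rw [uIoc_of_le hst] at hr
        exact hK r ⟨hs.1.trans hr.1.le, hr.2.trans ht.2⟩
    rwa [Real.norm_eq_abs, abs_of_nonneg (sub_nonneg.2 hst)] at this
  rw [hdiff]
  exact (abs_add_le _ _).trans (add_le_add_left hdrift _)

theorem tendsto_sSup_abs_of_abs_le {ι α : Type*} {l : Filter ι} {f : ι → α → ℝ} {β : ι → ℝ}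
    (hf : ∀ᶠ j in l, ∀ a, |f j a| ≤ β j) (hβ : Tendsto β l (𝓝 0)) :
    Tendsto (fun j => sSup {y | ∃ a, y = |f j a|}) l (𝓝 0) := by
  -- bound by `max (β j) 0` rather than `β j`, since `sSup ∅ = 0` when `α` is empty
  refine squeeze_zero' (Eventually.of_forall fun j => Real.sSup_nonneg ?_) ?_
    (by simpa using hβ.max (tendsto_const_nhds (x := (0:ℝ))))
  · rintro _ ⟨a, rfl⟩
    exact abs_nonneg _
  · filter_upwards [hf] with j hj
    exact Real.sSup_le (by rintro _ ⟨a, rfl⟩; exact (hj a).trans (le_max_left _ _))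
      (le_max_right _ _)

section Remainder

variable {Θ : Type*}

/-- `R_{n,ε}(θ)` for the path `x = X^{θ₀,ε}` on the grid `t_k = k / n`. -/
noncomputable def contrastRemainder (b : ℝ → Θ → ℝ) (x : ℝ → ℝ) (θ0 θ : Θ) (n : ℕ) : ℝ :=
  (-2) * ∑ k ∈ Finset.range n,
    (b (x ((k : ℝ) / n)) θ - b (x ((k : ℝ) / n)) θ0)
      * ∫ s in ((k : ℝ) / n)..(((k : ℝ) + 1) / n), (b (x s) θ0 - b (x ((k : ℝ) / n)) θ0)

theorem abs_contrastRemainder_le {b : ℝ → Θ → ℝ} {x : ℝ → ℝ} {θ0 : Θ} {c M δ : ℝ} {n : ℕ}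
    (hbL : ∀ y z, |b y θ0 - b z θ0| ≤ c * |y - z|) (hbG : ∀ θ y, |b y θ| ≤ c * (1 + |y|))
    (hM : ∀ t ∈ Icc 0 1, |x t| ≤ M) (hn : 0 < n)
    (hδ : ∀ s ∈ Icc 0 1, ∀ t ∈ Icc 0 1, s ≤ t → t - s ≤ (n : ℝ)⁻¹ → |x t - x s| ≤ δ) (θ : Θ) :
    |contrastRemainder b x θ0 θ n| ≤ 4 * c ^ 2 * (1 + M) * δ := by
  have hc : 0 ≤ c := by simpa using (abs_nonneg _).trans (hbG θ0 0)
  have hn0 : (0 : ℝ) < n := by exact_mod_cast hn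
  have hM0 : 0 ≤ M := (abs_nonneg _).trans (hM 0 ⟨le_rfl, zero_le_one⟩)
  have hterm : ∀ k ∈ Finset.range n,
      |(b (x ((k : ℝ) / n)) θ - b (x ((k : ℝ) / n)) θ0)
        * ∫ s in ((k : ℝ) / n)..(((k : ℝ) + 1) / n), (b (x s) θ0 - b (x ((k : ℝ) / n)) θ0)|
        ≤ 2 * c * (1 + M) * (c * δ * (n : ℝ)⁻¹) := by
    intro k hk
    have hk1 : (k : ℝ) + 1 ≤ n := by exact_mod_cast Finset.mem_range.1 hk
    have hlo : (k : ℝ) / n ∈ Icc 0 1 := ⟨by positivity, (div_le_one hn0).2 (by linarith)⟩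
    have hhi : ((k : ℝ) + 1) / n ∈ Icc 0 1 := ⟨by positivity, (div_le_one hn0).2 hk1⟩
    have hstep : ((k : ℝ) + 1) / n - (k : ℝ) / n = (n : ℝ)⁻¹ := by field_simp; ring
    have hle : (k : ℝ) / n ≤ ((k : ℝ) + 1) / n := by linarith [inv_pos.2 hn0]
    rw [abs_mul]
    refine mul_le_mul ?_ ?_ (abs_nonneg _) (by positivity)
    · calc _ ≤ |b (x ((k : ℝ) / n)) θ| + |b (x ((k : ℝ) / n)) θ0| := abs_sub _ _
        _ ≤ c * (1 + M) + c * (1 + M) := by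
          gcongr <;> exact (hbG _ _).trans (by gcongr; exact hM _ hlo)
        _ = 2 * c * (1 + M) := by ring
    · have := norm_integral_le_of_norm_le_const (C := c * δ)
        (f := fun s => b (x s) θ0 - b (x ((k : ℝ) / n)) θ0) fun s hs => by
          rw [uIoc_of_le hle] at hs
          have hs1 : s ∈ Icc 0 1 := ⟨hlo.1.trans hs.1.le, hs.2.trans hhi.2⟩
          exact (hbL _ _).trans (mul_le_mul_of_nonneg_left
            (hδ _ hlo s hs1 hs.1.le (by linarith [hs.2])) hc)
      rwa [Real.norm_eq_abs, hstep, abs_of_pos (inv_pos.2 hn0)] at this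
  calc |contrastRemainder b x θ0 θ n|
      = 2 * |∑ k ∈ Finset.range n, (b (x ((k : ℝ) / n)) θ - b (x ((k : ℝ) / n)) θ0)
          * ∫ s in ((k : ℝ) / n)..(((k : ℝ) + 1) / n), (b (x s) θ0 - b (x ((k : ℝ) / n)) θ0)| := by
        rw [contrastRemainder, abs_mul]; norm_num
    _ ≤ 2 * ∑ _k ∈ Finset.range n, 2 * c * (1 + M) * (c * δ * (n : ℝ)⁻¹) := by
        gcongr
        exact (Finset.abs_sum_le_sum_abs _ _).trans (Finset.sum_le_sum hterm)
    _ = 4 * c ^ 2 * (1 + M) * δ := by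
        rw [Finset.sum_const, Finset.card_range, nsmul_eq_mul]
        field_simp
        ring

theorem abs_contrastRemainder_le_of_eq_add_integral {b : ℝ → Θ → ℝ} {W x : ℝ → ℝ} {θ0 : Θ}
    {x0 c lam CW MW ε : ℝ} {n : ℕ} (hc : 0 < c) (hlam : 0 ≤ lam)
    (hbL : ∀ y z, |b y θ0 - b z θ0| ≤ c * |y - z|) (hbG : ∀ θ y, |b y θ| ≤ c * (1 + |y|))
    (hWH : ∀ s ∈ Icc (0:ℝ) 1, ∀ t ∈ Icc (0:ℝ) 1, |W t - W s| ≤ CW * |t - s| ^ lam)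
    (hMW : ∀ t ∈ Icc (0:ℝ) 1, |W t| ≤ MW) (hx : ContinuousOn x (Icc 0 1)) (hε : ε ∈ Ioc 0 1)
    (heq : ∀ t ∈ Icc (0:ℝ) 1, x t = x0 + (∫ s in (0:ℝ)..t, b (x s) θ0) + ε * W t)
    (hn : 0 < n) (θ : Θ) :
    |contrastRemainder b x θ0 θ n| ≤ 4 * c ^ 2 * (1 + (|x0| + MW + c) * exp c) *
      (c * (1 + (|x0| + MW + c) * exp c) * (n : ℝ)⁻¹ + ε * CW * (n : ℝ) ^ (-lam)) := by
  set M := (|x0| + MW + c) * exp c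
  have hb0 : Continuous fun y => b y θ0 := continuous_of_abs_sub_le hbL
  have hεW : ∀ t ∈ Icc (0:ℝ) 1, |ε * W t| ≤ MW := fun t ht => by
    rw [abs_mul, abs_of_pos hε.1]
    exact (mul_le_of_le_one_left (abs_nonneg _) hε.2).trans (hMW t ht)
  have hM : ∀ t ∈ Icc (0:ℝ) 1, |x t| ≤ M := by
    simpa only [mul_one] using abs_le_of_eq_add_integral hc hb0 (hbG θ0) hx hεW heq
  have hdrift : ∀ r ∈ Icc (0:ℝ) 1, |b (x r) θ0| ≤ c * (1 + M) := fun r hr =>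
    (hbG θ0 (x r)).trans (by gcongr; exact hM r hr)
  have hCW : 0 ≤ CW := by simpa using (abs_nonneg _).trans (hWH 0 (by simp) 1 (by simp))
  refine abs_contrastRemainder_le hbL hbG hM hn (fun s hs t ht hst hts => ?_) θ
  calc |x t - x s| ≤ c * (1 + M) * (t - s) + |ε * W t - ε * W s| :=
        abs_sub_le_of_eq_add_integral (g := fun y => b y θ0) (hb0.comp_continuousOn hx) hdrift heq
          hs ht hst
    _ ≤ c * (1 + M) * (n : ℝ)⁻¹ + ε * (CW * ((n : ℝ)⁻¹) ^ lam) := by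
        rw [← mul_sub, abs_mul, abs_of_pos hε.1]
        have hcM : 0 ≤ c * (1 + M) := (abs_nonneg _).trans (hdrift 0 (by simp))
        refine add_le_add (mul_le_mul_of_nonneg_left hts hcM)
          (mul_le_mul_of_nonneg_left ((hWH s hs t ht).trans ?_) hε.1.le)
        gcongr
        rwa [abs_of_nonneg (sub_nonneg.2 hst)]
    _ = c * (1 + M) * (n : ℝ)⁻¹ + ε * CW * (n : ℝ) ^ (-lam) := by
        rw [Real.inv_rpow (Nat.cast_nonneg n), ← Real.rpow_neg (Nat.cast_nonneg n), mul_assoc ε]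

end Remainder

theorem remainder_vanishes_general {Θ : Type*} (H lam c x0 : ℝ)
    (hlam : lam ∈ Set.Ioo (0:ℝ) H) (hc : 0 < c)
    (b : ℝ → Θ → ℝ) (W : ℝ → ℝ) (X : ℝ → ℝ → ℝ) (θ0 : Θ) (CW MW : ℝ)
    (hbL : ∀ (θ : Θ) (y z : ℝ), |b y θ - b z θ| ≤ c * |y - z|)
    (hbG : ∀ (θ : Θ) (y : ℝ), |b y θ| ≤ c * (1 + |y|))
    (hWH : ∀ s ∈ Set.Icc (0:ℝ) 1, ∀ t ∈ Set.Icc (0:ℝ) 1, |W t - W s| ≤ CW * |t - s| ^ lam)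
    (hMW : ∀ t ∈ Set.Icc (0:ℝ) 1, |W t| ≤ MW)
    (hXc : ∀ ε, ContinuousOn (X ε) (Set.Icc 0 1))
    (hX : ∀ ε ∈ Set.Ioc (0:ℝ) 1, ∀ t ∈ Set.Icc (0:ℝ) 1,
      X ε t = x0 + (∫ s in (0:ℝ)..t, b (X ε s) θ0) + ε * W t) :
    ∃ C > (0:ℝ),
      (∀ n : ℕ, 1 ≤ n → ∀ ε ∈ Set.Ioc (0:ℝ) 1, ∀ θ : Θ,
        |(-2) * ∑ k ∈ Finset.range n,
            (b (X ε ((k : ℝ) / n)) θ - b (X ε ((k : ℝ) / n)) θ0)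
              * ∫ s in ((k : ℝ) / n)..(((k : ℝ) + 1) / n),
                  (b (X ε s) θ0 - b (X ε ((k : ℝ) / n)) θ0)|
          ≤ C * ((n : ℝ)⁻¹ + ε * (n : ℝ) ^ (-lam))) ∧
      ∀ (ns : ℕ → ℕ) (es : ℕ → ℝ), Tendsto ns atTop atTop →
        Tendsto es atTop (nhdsWithin 0 (Set.Ioi 0)) → (∀ j, es j ∈ Set.Ioc (0:ℝ) 1) →
        Tendsto (fun j => sSup {y | ∃ θ : Θ, y =
            |(-2) * ∑ k ∈ Finset.range (ns j),
              (b (X (es j) ((k : ℝ) / (ns j))) θ - b (X (es j) ((k : ℝ) / (ns j))) θ0)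
                * ∫ s in ((k : ℝ) / (ns j))..(((k : ℝ) + 1) / (ns j)),
                    (b (X (es j) s) θ0 - b (X (es j) ((k : ℝ) / (ns j))) θ0)|})
          atTop (nhds 0) := by
  obtain ⟨hlam0, -⟩ := hlam
  set M := (|x0| + MW + c) * exp c
  set K := c * (1 + M)
  have hM : 0 ≤ M := by
    have := (abs_nonneg _).trans (hMW 0 (by simp))
    positivity
  have hCW : 0 ≤ CW := by simpa using (abs_nonneg _).trans (hWH 0 (by simp) 1 (by simp))
  have hK : 0 < K := by positivity
  have hbound : ∀ n : ℕ, 1 ≤ n → ∀ ε ∈ Ioc (0:ℝ) 1, ∀ θ : Θ,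
      |contrastRemainder b (X ε) θ0 θ n|
        ≤ 4 * c ^ 2 * (1 + M) * (K + CW) * ((n : ℝ)⁻¹ + ε * (n : ℝ) ^ (-lam)) := by
    intro n hn ε hε θ
    refine (abs_contrastRemainder_le_of_eq_add_integral hc hlam0.le (hbL θ0) hbG hWH hMW (hXc ε)
      hε (hX ε hε) hn θ).trans ?_
    have hεq : 0 ≤ ε * (n : ℝ) ^ (-lam) := by have := hε.1.le; positivity
    rw [mul_assoc _ (K + CW)]
    gcongr
    nlinarith [inv_nonneg.2 (Nat.cast_nonneg (α := ℝ) n)]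
  refine ⟨_, by positivity, hbound, fun ns es hns hes hes1 => ?_⟩
  have hn : Tendsto (fun j => (ns j : ℝ)) atTop atTop := tendsto_natCast_atTop_atTop.comp hns
  have hrate := (tendsto_inv_atTop_zero.comp hn).add ((hes.mono_right nhdsWithin_le_nhds).mul
    ((tendsto_rpow_neg_atTop hlam0).comp hn))
  refine tendsto_sSup_abs_of_abs_le (f := fun j θ => contrastRemainder b (X (es j)) θ0 θ (ns j))
    ?_ (by simpa using hrate.const_mul (4 * c ^ 2 * (1 + M) * (K + CW)))
  filter_upwards [hns.eventually_ge_atTop 1] with j hj using hbound (ns j) hj (es j) (hes1 j)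

/-- Vanishing of the remainder term `R_{n,ε}` of the contrast decomposition:
`sup_θ |R_{n,ε}(θ)| ≤ C (n⁻¹ + ε n^{-λ})`, hence it tends to `0` pathwise. -/
theorem remainder_vanishes {Θ : Type*} (H lam c x0 : ℝ) (hH : H ∈ Set.Ioo (0:ℝ) 1)
    (hlam : lam ∈ Set.Ioo (0:ℝ) H) (hc : 0 < c)
    (b : ℝ → Θ → ℝ) (W : ℝ → ℝ) (X : ℝ → ℝ → ℝ) (θ0 : Θ) (CW MW : ℝ)
    (hbL : ∀ (θ : Θ) (y z : ℝ), |b y θ - b z θ| ≤ c * |y - z|)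
    (hbG : ∀ (θ : Θ) (y : ℝ), |b y θ| ≤ c * (1 + |y|))
    (hWH : ∀ s ∈ Set.Icc (0:ℝ) 1, ∀ t ∈ Set.Icc (0:ℝ) 1, |W t - W s| ≤ CW * |t - s| ^ lam)
    (hMW : ∀ t ∈ Set.Icc (0:ℝ) 1, |W t| ≤ MW)
    (hXc : ∀ ε, ContinuousOn (X ε) (Set.Icc 0 1))
    (hX : ∀ ε ∈ Set.Ioc (0:ℝ) 1, ∀ t ∈ Set.Icc (0:ℝ) 1,
      X ε t = x0 + (∫ s in (0:ℝ)..t, b (X ε s) θ0) + ε * W t) :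
    ∃ C > (0:ℝ),
      (∀ n : ℕ, 1 ≤ n → ∀ ε ∈ Set.Ioc (0:ℝ) 1, ∀ θ : Θ,
        |(-2) * ∑ k ∈ Finset.range n,
            (b (X ε ((k : ℝ) / n)) θ - b (X ε ((k : ℝ) / n)) θ0)
              * ∫ s in ((k : ℝ) / n)..(((k : ℝ) + 1) / n),
                  (b (X ε s) θ0 - b (X ε ((k : ℝ) / n)) θ0)|
          ≤ C * ((n : ℝ)⁻¹ + ε * (n : ℝ) ^ (-lam))) ∧
      ∀ (ns : ℕ → ℕ) (es : ℕ → ℝ), Tendsto ns atTop atTop →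
        Tendsto es atTop (nhdsWithin 0 (Set.Ioi 0)) → (∀ j, es j ∈ Set.Ioc (0:ℝ) 1) →
        Tendsto (fun j => sSup {y | ∃ θ : Θ, y =
            |(-2) * ∑ k ∈ Finset.range (ns j),
              (b (X (es j) ((k : ℝ) / (ns j))) θ - b (X (es j) ((k : ℝ) / (ns j))) θ0)
                * ∫ s in ((k : ℝ) / (ns j))..(((k : ℝ) + 1) / (ns j)),
                    (b (X (es j) s) θ0 - b (X (es j) ((k : ℝ) / (ns j))) θ0)|})
          atTop (nhds 0) :=
  remainder_vanishes_general H lam c x0 hlam hc b W X θ0 CW MW hbL hbG hWH hMW hXc hX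
end

section
/- Vanishing of the drift correction term in the score: under the growth condition $\sup_\theta |\partial_{\theta_i} b(x,\theta)| \le C(1+|x|^N)$, the Lipschitz condition on $b$, and the condition $\varepsilon n \to \infty$, the term $H^{(1)}_{n,\varepsilon} := \varepsilon^{-1} \sum_{k=0}^{n-1} \partial_{\theta_i} b(X_{t_k}^{\theta_0,\varepsilon},\theta_0) \int_{t_k}^{t_{k+1}} (b(X_s^{\theta_0,\varepsilon},\theta_0) - b(X_{t_k}^{\theta_0,\varepsilon},\theta_0))\,ds$ satisfies $|H^{(1)}_{n,\varepsilon}| \le C'\big(\tfrac{1}{n\varepsilon} + n^{-\lambda}\big)$ for any $\lambda \in (0,H)$, where $C'$ depends on $\sup_t |W_t^H|$, $\|W^H\|_{\lambda}$ and $\sup_t |x_t^{\theta_0}|$; hence $H^{(1)}_{n,\varepsilon} \to 0$ as $n \to \infty$, $\varepsilon \downarrow 0$ with $n\varepsilon \to \infty$. -/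
/-!
By Grönwall, the solution `X^ε` is bounded on `[0, 1]` uniformly in `ε ≤ 1`; hence the drift is
bounded along it and `X^ε` oscillates by `O(1/n + ε n^{-λ})` over each mesh interval of length
`1/n`. By the Lipschitz property each of the `n` integrals is then `O(1/n)` times that oscillation,
and `∂_θ b` is bounded along the path, so the sum is `O(1/n + ε n^{-λ})`; dividing by `ε` gives
`O(1/(nε) + n^{-λ})`.
-/

open Filter Set Topology intervalIntegral MeasureTheory

theorem hasDerivWithinAt_integral_Ici {g : ℝ → ℝ} {a b t : ℝ} (hg : ContinuousOn g (Icc a b))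
    (ht : t ∈ Ico a b) : HasDerivWithinAt (fun u => ∫ s in a..u, g s) (g t) (Ici t) t := by
  have hIoo : Ioo t b ⊆ Icc a b := Ioo_subset_Icc_self.trans (Icc_subset_Icc ht.1 le_rfl)
  refine integral_hasDerivWithinAt_right (t := Ioi t) ?_ ?_ ?_
  · exact (hg.mono (Icc_subset_Icc le_rfl ht.2.le)).intervalIntegrable_of_Icc ht.1
  · rw [← nhdsWithin_Ioo_eq_nhdsGT ht.2]
    exact (hg.mono hIoo).stronglyMeasurableAtFilter_nhdsWithin measurableSet_Ioo t
  · rw [← continuousWithinAt_Ioo_iff_Ioi ht.2]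
    exact (hg t (Ico_subset_Icc_self ht)).mono hIoo

section IntegralEquation

variable {g X e : ℝ → ℝ} {x0 T : ℝ}

theorem abs_le_of_eq_integral_add (hg : ContinuousOn g (Icc 0 T))
    (hX : ∀ t ∈ Icc 0 T, X t = x0 + (∫ s in (0:ℝ)..t, g s) + e t) {c E : ℝ} (hc : 0 ≤ c)
    (hgX : ∀ t ∈ Icc 0 T, |g t| ≤ c * (1 + |X t|)) (he : ∀ t ∈ Icc 0 T, |e t| ≤ E) :
    ∀ t ∈ Icc 0 T, |X t| ≤ gronwallBound |x0| c (c * (1 + E)) T + E := by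
  intro t ht
  have hT : 0 ≤ T := ht.1.trans ht.2
  have hE : 0 ≤ E := (abs_nonneg _).trans (he t ht)
  -- `X` itself need not be differentiable (because of `e`), but its drift part `Y` is.
  set Y : ℝ → ℝ := fun u => x0 + ∫ s in (0:ℝ)..u, g s
  have hXY : ∀ t ∈ Icc 0 T, |X t| ≤ |Y t| + E := fun t ht => by
    rw [hX t ht]
    exact (abs_add_le _ _).trans (add_le_add_right (he t ht) _)
  have hYc : ContinuousOn Y (Icc 0 T) := by
    rw [← uIcc_of_le hT]
    exact continuousOn_const.add <|
      continuousOn_primitive_interval' (hg.intervalIntegrable_of_Icc hT) left_mem_uIcc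
  have hYd : ∀ t ∈ Ico 0 T, HasDerivWithinAt Y (g t) (Ici t) t := fun t ht =>
    (hasDerivWithinAt_integral_Ici hg ht).const_add x0
  have hY : ∀ t ∈ Ico 0 T, ‖g t‖ ≤ c * ‖Y t‖ + c * (1 + E) := fun t ht =>
    calc |g t| ≤ c * (1 + |X t|) := hgX t (Ico_subset_Icc_self ht)
      _ ≤ c * (1 + (|Y t| + E)) := by gcongr; exact hXY t (Ico_subset_Icc_self ht)
      _ = c * ‖Y t‖ + c * (1 + E) := by rw [Real.norm_eq_abs]; ring
  have hgron := norm_le_gronwallBound_of_norm_deriv_right_le hYc hYd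
    (show ‖Y 0‖ ≤ |x0| by simp [Y]) hY t ht
  rw [Real.norm_eq_abs, sub_zero] at hgron
  calc |X t| ≤ |Y t| + E := hXY t ht
    _ ≤ gronwallBound |x0| c (c * (1 + E)) T + E := by
      gcongr
      exact hgron.trans (gronwallBound_mono (abs_nonneg x0) (by positivity) hc ht.2)

theorem abs_sub_le_of_eq_integral_add (hg : ContinuousOn g (Icc 0 T))
    (hX : ∀ t ∈ Icc 0 T, X t = x0 + (∫ s in (0:ℝ)..t, g s) + e t) {B : ℝ}
    (hB : ∀ t ∈ Icc 0 T, |g t| ≤ B) {u t : ℝ} (hu : u ∈ Icc 0 T) (ht : t ∈ Icc 0 T)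
    (hut : u ≤ t) : |X t - X u| ≤ B * (t - u) + |e t - e u| := by
  have hint : ∀ r ∈ Icc 0 T, IntervalIntegrable g volume 0 r := fun r hr =>
    (hg.mono (Icc_subset_Icc le_rfl hr.2)).intervalIntegrable_of_Icc hr.1
  have hdiff : X t - X u = (∫ s in u..t, g s) + (e t - e u) := by
    rw [hX t ht, hX u hu, ← integral_interval_sub_left (hint t ht) (hint u hu)]
    ring
  have hI : |∫ s in u..t, g s| ≤ B * (t - u) := by
    have := intervalIntegral.norm_integral_le_of_norm_le_const (a := u) (b := t) (C := B) (f := g)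
      fun s hs => by
        rw [uIoc_of_le hut] at hs
        exact hB s ⟨hu.1.trans hs.1.le, hs.2.trans ht.2⟩
    rwa [Real.norm_eq_abs, abs_of_nonneg (sub_nonneg.2 hut)] at this
  rw [hdiff]
  exact (abs_add_le _ _).trans (add_le_add_left hI _)

end IntegralEquation

theorem abs_sum_mul_integral_sub_le (a : ℕ → ℝ) (φ : ℝ → ℝ) {n : ℕ} (hn : 0 < n) {A η : ℝ}
    (ha : ∀ k < n, |a k| ≤ A)
    (hφ : ∀ k < n, ∀ s ∈ Ioc ((k : ℝ) / n) (((k : ℝ) + 1) / n), |φ s - φ (k / n)| ≤ η) :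
    |∑ k ∈ Finset.range n, a k * ∫ s in (k : ℝ) / n..((k : ℝ) + 1) / n, (φ s - φ (k / n))|
      ≤ A * η := by
  have hn' : (0 : ℝ) < n := Nat.cast_pos.2 hn
  have hA : 0 ≤ A := (abs_nonneg _).trans (ha 0 hn)
  have hterm : ∀ k ∈ Finset.range n,
      |a k * ∫ s in (k : ℝ) / n..((k : ℝ) + 1) / n, (φ s - φ (k / n))| ≤ A * (η / n) := by
    intro k hk
    have hk := Finset.mem_range.1 hk
    have hlen : ((k : ℝ) + 1) / n - k / n = 1 / n := by ring
    have hI := intervalIntegral.norm_integral_le_of_norm_le_const (a := (k : ℝ) / n)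
      (b := ((k : ℝ) + 1) / n) (C := η)
      (f := fun s => φ s - φ (k / n)) fun s hs => by
        rw [uIoc_of_le (by gcongr; simp)] at hs
        exact hφ k hk s hs
    rw [Real.norm_eq_abs, hlen, abs_of_pos (one_div_pos.2 hn'), mul_one_div] at hI
    rw [abs_mul]
    exact mul_le_mul (ha k hk) hI (abs_nonneg _) hA
  calc _ ≤ _ := Finset.abs_sum_le_sum_abs _ _
    _ ≤ ∑ _k ∈ Finset.range n, A * (η / n) := Finset.sum_le_sum hterm
    _ = A * η := by
      rw [Finset.sum_const, Finset.card_range, nsmul_eq_mul]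
      field_simp

theorem nonneg_of_abs_sub_le_mul_rpow {W : ℝ → ℝ} {C lam : ℝ}
    (hW : ∀ s ∈ Icc (0:ℝ) 1, ∀ t ∈ Icc (0:ℝ) 1, |W t - W s| ≤ C * |t - s| ^ lam) : 0 ≤ C := by
  simpa using
    (abs_nonneg _).trans (hW 0 (left_mem_Icc.2 zero_le_one) 1 (right_mem_Icc.2 zero_le_one))

theorem abs_inv_mul_sum_mul_integral_sub_le {f a X W : ℝ → ℝ} {x0 c A B CW lam ε : ℝ} {n : ℕ}
    (hn : 0 < n) (hε : 0 < ε) (hc : 0 ≤ c) (hlam : 0 ≤ lam)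
    (hf : ∀ y z, |f y - f z| ≤ c * |y - z|) (hfX : ContinuousOn (fun s => f (X s)) (Icc 0 1))
    (hX : ∀ t ∈ Icc (0:ℝ) 1, X t = x0 + (∫ s in (0:ℝ)..t, f (X s)) + ε * W t)
    (hB : ∀ t ∈ Icc (0:ℝ) 1, |f (X t)| ≤ B)
    (hW : ∀ s ∈ Icc (0:ℝ) 1, ∀ t ∈ Icc (0:ℝ) 1, |W t - W s| ≤ CW * |t - s| ^ lam)
    (ha : ∀ t ∈ Icc (0:ℝ) 1, |a (X t)| ≤ A) :
    |ε⁻¹ * ∑ k ∈ Finset.range n, a (X (k / n))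
        * ∫ s in (k : ℝ) / n..((k : ℝ) + 1) / n, (f (X s) - f (X (k / n)))|
      ≤ A * c * (B * (1 / (n * ε)) + CW * (n : ℝ) ^ (-lam)) := by
  have hn' : (0 : ℝ) < n := Nat.cast_pos.2 hn
  have hCW : 0 ≤ CW := nonneg_of_abs_sub_le_mul_rpow hW
  have hgrid : ∀ k < n, (k : ℝ) / n ∈ Icc 0 1 := fun k hk =>
    ⟨by positivity, (div_le_one hn').2 (by exact_mod_cast hk.le)⟩
  have hosc : ∀ k < n, ∀ s ∈ Ioc ((k : ℝ) / n) (((k : ℝ) + 1) / n),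
      |f (X s) - f (X (k / n))| ≤ c * (B * (1 / n) + ε * (CW * (1 / n) ^ lam)) := by
    intro k hk s hs
    have hs1 : s ∈ Icc (0:ℝ) 1 :=
      ⟨(hgrid k hk).1.trans hs.1.le, hs.2.trans ((div_le_one hn').2 (by exact_mod_cast hk))⟩
    have hstep : s - k / n ≤ 1 / n := by
      have := hs.2
      rw [add_div] at this
      linarith
    have hB0 : 0 ≤ B := (abs_nonneg _).trans (hB s hs1)
    have hWs : |W s - W (k / n)| ≤ CW * (1 / n) ^ lam := by
      refine (hW _ (hgrid k hk) s hs1).trans ?_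
      rw [abs_of_nonneg (sub_nonneg.2 hs.1.le)]
      gcongr
      linarith [hs.1]
    calc |f (X s) - f (X (k / n))| ≤ c * |X s - X (k / n)| := hf _ _
      _ ≤ c * (B * (s - k / n) + |ε * W s - ε * W (k / n)|) :=
          mul_le_mul_of_nonneg_left
            (abs_sub_le_of_eq_integral_add hfX hX hB (hgrid k hk) hs1 hs.1.le) hc
      _ ≤ c * (B * (1 / n) + ε * (CW * (1 / n) ^ lam)) := by
          rw [← mul_sub, abs_mul, abs_of_pos hε]
          gcongr
  have hsum := abs_sum_mul_integral_sub_le (fun k => a (X (k / n))) (fun s => f (X s)) hn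
    (fun k hk => ha _ (hgrid k hk)) hosc
  calc _ = ε⁻¹ * |∑ k ∈ Finset.range n, a (X (k / n))
        * ∫ s in (k : ℝ) / n..((k : ℝ) + 1) / n, (f (X s) - f (X (k / n)))| := by
        rw [abs_mul, abs_inv, abs_of_pos hε]
    _ ≤ ε⁻¹ * (A * (c * (B * (1 / n) + ε * (CW * (1 / n) ^ lam)))) := by gcongr
    _ = A * c * (B * (1 / (n * ε)) + CW * (n : ℝ) ^ (-lam)) := by
        rw [Real.rpow_neg hn'.le, one_div, Real.inv_rpow hn'.le]
        field_simp

theorem exists_pos_abs_le_and_tendsto_zero {F : ℕ → ℝ → ℝ} {C lam : ℝ} (hC : 0 < C)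
    (hlam : 0 < lam)
    (hF : ∀ n : ℕ, 1 ≤ n → ∀ ε ∈ Ioc (0:ℝ) 1,
      |F n ε| ≤ C * (1 / ((n : ℝ) * ε) + (n : ℝ) ^ (-lam))) :
    ∃ C' > (0:ℝ), (∀ n : ℕ, 1 ≤ n → ∀ ε ∈ Ioc (0:ℝ) 1,
        |F n ε| ≤ C' * (1 / ((n : ℝ) * ε) + (n : ℝ) ^ (-lam))) ∧
      ∀ (ns : ℕ → ℕ) (es : ℕ → ℝ), Tendsto ns atTop atTop →
        Tendsto es atTop (𝓝[>] 0) → (∀ j, es j ∈ Ioc (0:ℝ) 1) →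
        Tendsto (fun j => (ns j : ℝ) * es j) atTop atTop →
        Tendsto (fun j => F (ns j) (es j)) atTop (𝓝 0) := by
  refine ⟨C, hC, hF, fun ns es hns _ hes hnes => ?_⟩
  have hlim : Tendsto (fun j => C * (1 / ((ns j : ℝ) * es j) + (ns j : ℝ) ^ (-lam)))
      atTop (𝓝 0) := by
    have h1 : Tendsto (fun j => 1 / ((ns j : ℝ) * es j)) atTop (𝓝 0) := by
      simpa only [one_div, Pi.inv_def] using hnes.inv_tendsto_atTop
    have h2 : Tendsto (fun j => (ns j : ℝ) ^ (-lam)) atTop (𝓝 0) :=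
      (tendsto_rpow_neg_atTop hlam).comp (tendsto_natCast_atTop_atTop.comp hns)
    simpa using (h1.add h2).const_mul C
  refine squeeze_zero_norm' ?_ hlim
  filter_upwards [hns.eventually_ge_atTop 1] with j hj
  exact hF _ hj _ (hes j)

theorem score_drift_term_vanishes_general {Θ : Type*} (H lam c x0 C0 : ℝ) (N : ℕ)
    (hlam : lam ∈ Set.Ioo (0:ℝ) H) (hc : 0 < c) (hC0 : 0 < C0)
    (b dbi : ℝ → Θ → ℝ) (W : ℝ → ℝ) (X : ℝ → ℝ → ℝ) (θ0 : Θ) (CW MW : ℝ)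
    (hbL : ∀ (θ : Θ) (y z : ℝ), |b y θ - b z θ| ≤ c * |y - z|)
    (hbG : ∀ (θ : Θ) (y : ℝ), |b y θ| ≤ c * (1 + |y|))
    (hdb : ∀ (θ : Θ) (y : ℝ), |dbi y θ| ≤ C0 * (1 + |y| ^ N))
    (hWH : ∀ s ∈ Set.Icc (0:ℝ) 1, ∀ t ∈ Set.Icc (0:ℝ) 1, |W t - W s| ≤ CW * |t - s| ^ lam)
    (hMW : ∀ t ∈ Set.Icc (0:ℝ) 1, |W t| ≤ MW)
    (hXc : ∀ ε, ContinuousOn (X ε) (Set.Icc 0 1))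
    (hX : ∀ ε ∈ Set.Ioc (0:ℝ) 1, ∀ t ∈ Set.Icc (0:ℝ) 1,
      X ε t = x0 + (∫ s in (0:ℝ)..t, b (X ε s) θ0) + ε * W t) :
    ∃ C' > (0:ℝ),
      (∀ n : ℕ, 1 ≤ n → ∀ ε ∈ Set.Ioc (0:ℝ) 1,
        |ε⁻¹ * ∑ k ∈ Finset.range n, dbi (X ε ((k : ℝ) / n)) θ0
            * ∫ s in ((k : ℝ) / n)..(((k : ℝ) + 1) / n),
                (b (X ε s) θ0 - b (X ε ((k : ℝ) / n)) θ0)|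
          ≤ C' * (1 / ((n : ℝ) * ε) + (n : ℝ) ^ (-lam))) ∧
      ∀ (ns : ℕ → ℕ) (es : ℕ → ℝ), Tendsto ns atTop atTop →
        Tendsto es atTop (nhdsWithin 0 (Set.Ioi 0)) → (∀ j, es j ∈ Set.Ioc (0:ℝ) 1) →
        Tendsto (fun j => (ns j : ℝ) * es j) atTop atTop →
        Tendsto (fun j => (es j)⁻¹ * ∑ k ∈ Finset.range (ns j),
            dbi (X (es j) ((k : ℝ) / ns j)) θ0
              * ∫ s in ((k : ℝ) / ns j)..(((k : ℝ) + 1) / ns j),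
                  (b (X (es j) s) θ0 - b (X (es j) ((k : ℝ) / ns j)) θ0))
          atTop (nhds 0) := by
  have hCW : 0 ≤ CW := nonneg_of_abs_sub_le_mul_rpow hWH
  set M := gronwallBound |x0| c (c * (1 + MW)) 1 + MW
  have hbc : Continuous fun y => b y θ0 := (LipschitzWith.of_dist_le' (hbL θ0)).continuous
  have hXM : ∀ ε ∈ Ioc (0:ℝ) 1, ∀ t ∈ Icc (0:ℝ) 1, |X ε t| ≤ M := fun ε hε =>
    abs_le_of_eq_integral_add (hbc.comp_continuousOn (hXc ε)) (hX ε hε) hc.le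
      (fun t _ => hbG θ0 _) fun t ht => by
        rw [abs_mul, abs_of_pos hε.1]
        exact (mul_le_of_le_one_left (abs_nonneg _) hε.2).trans (hMW t ht)
  have hM0 : 0 ≤ M :=
    (abs_nonneg _).trans (hXM 1 (right_mem_Ioc.2 one_pos) 0 (left_mem_Icc.2 zero_le_one))
  refine exists_pos_abs_le_and_tendsto_zero (C := C0 * (1 + M ^ N) * c * (c * (1 + M) + CW))
    (by positivity) hlam.1 fun n hn ε hε => ?_
  have hbound := abs_inv_mul_sum_mul_integral_sub_le (a := fun y => dbi y θ0)
    (A := C0 * (1 + M ^ N)) (B := c * (1 + M)) hn hε.1 hc.le hlam.1.le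
    (hbL θ0) (hbc.comp_continuousOn (hXc ε)) (hX ε hε)
    (fun t ht => (hbG θ0 _).trans (by gcongr; exact hXM ε hε t ht)) hWH
    (fun t ht => (hdb θ0 _).trans (by gcongr; exact hXM ε hε t ht))
  have hx : 0 ≤ 1 / ((n : ℝ) * ε) := by have := hε.1; positivity
  have hy : 0 ≤ (n : ℝ) ^ (-lam) := by positivity
  have hB : 0 ≤ c * (1 + M) := by positivity
  refine hbound.trans ?_
  rw [mul_assoc (C0 * (1 + M ^ N) * c)]
  exact mul_le_mul_of_nonneg_left (by nlinarith [mul_nonneg hB hy, mul_nonneg hCW hx])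
    (by positivity)

/-- Vanishing of the drift correction term in the score:
`|H^{(1)}_{n,ε}| ≤ C'(1/(nε) + n^{-λ})`, hence it tends to `0` when `nε → ∞`. -/
theorem score_drift_term_vanishes {Θ : Type*} (H lam c x0 C0 : ℝ) (N : ℕ)
    (hH : H ∈ Set.Ioo (0:ℝ) 1) (hlam : lam ∈ Set.Ioo (0:ℝ) H) (hc : 0 < c) (hC0 : 0 < C0)
    (b dbi : ℝ → Θ → ℝ) (W : ℝ → ℝ) (X : ℝ → ℝ → ℝ) (θ0 : Θ) (CW MW : ℝ)
    (hbL : ∀ (θ : Θ) (y z : ℝ), |b y θ - b z θ| ≤ c * |y - z|)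
    (hbG : ∀ (θ : Θ) (y : ℝ), |b y θ| ≤ c * (1 + |y|))
    (hdb : ∀ (θ : Θ) (y : ℝ), |dbi y θ| ≤ C0 * (1 + |y| ^ N))
    (hWH : ∀ s ∈ Set.Icc (0:ℝ) 1, ∀ t ∈ Set.Icc (0:ℝ) 1, |W t - W s| ≤ CW * |t - s| ^ lam)
    (hMW : ∀ t ∈ Set.Icc (0:ℝ) 1, |W t| ≤ MW)
    (hXc : ∀ ε, ContinuousOn (X ε) (Set.Icc 0 1))
    (hX : ∀ ε ∈ Set.Ioc (0:ℝ) 1, ∀ t ∈ Set.Icc (0:ℝ) 1,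
      X ε t = x0 + (∫ s in (0:ℝ)..t, b (X ε s) θ0) + ε * W t) :
    ∃ C' > (0:ℝ),
      (∀ n : ℕ, 1 ≤ n → ∀ ε ∈ Set.Ioc (0:ℝ) 1,
        |ε⁻¹ * ∑ k ∈ Finset.range n, dbi (X ε ((k : ℝ) / n)) θ0
            * ∫ s in ((k : ℝ) / n)..(((k : ℝ) + 1) / n),
                (b (X ε s) θ0 - b (X ε ((k : ℝ) / n)) θ0)|
          ≤ C' * (1 / ((n : ℝ) * ε) + (n : ℝ) ^ (-lam))) ∧
      ∀ (ns : ℕ → ℕ) (es : ℕ → ℝ), Tendsto ns atTop atTop →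
        Tendsto es atTop (nhdsWithin 0 (Set.Ioi 0)) → (∀ j, es j ∈ Set.Ioc (0:ℝ) 1) →
        Tendsto (fun j => (ns j : ℝ) * es j) atTop atTop →
        Tendsto (fun j => (es j)⁻¹ * ∑ k ∈ Finset.range (ns j),
            dbi (X (es j) ((k : ℝ) / ns j)) θ0
              * ∫ s in ((k : ℝ) / ns j)..(((k : ℝ) + 1) / ns j),
                  (b (X (es j) s) θ0 - b (X (es j) ((k : ℝ) / ns j)) θ0))
          atTop (nhds 0) :=
  score_drift_term_vanishes_general H lam c x0 C0 N hlam hc hC0 b dbi W X θ0 CW MW hbL hbG hdb hWH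
    hMW hXc hX
end
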